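/- Zagier's strange identity in two variables: \sum_{n=0}^{\infty} \chi_{12}(n) \, q^{(n^2-1)/24} \, x^{(n-1)/2} = \sum_{n=0}^{\infty} (x;q)_{n+1} \, x^n, as an identity of formal power series in q and x (with q replaced by q^2 throughout to make exponents integral if desired). -/

import Mathlib

/-!
Let `F(x) = ∑ₙ (x;q)ₙ₊₁ xⁿ`. The telescoping identity `(x;q)ₙ - (x;q)ₙ₊₁ = x qⁿ (x;q)ₙ` and
`(x;q)ₙ₊₁ = (1 - x) (qx;q)ₙ` give, already for partial sums and modulo `x^(N+2)`, the functional
equation `F(x) = 1 - q x² - q² x³ F(qx)`. It determines `F` coefficient by coefficient, and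
`∑ₘ χ₁₂(2m+1) q^(m(m+1)/6) xᵐ`, which is the left-hand side since only odd `n = 2m+1` contribute,
satisfies it because `χ₁₂(n+6) = -χ₁₂(n)` and `(m+3)(m+4)/6 = m(m+1)/6 + (m+2)`.
-/

noncomputable section

/-- The product (coefficientwise) topology on formal power series. -/
instance powerSeriesTopology {R : Type*} [Semiring R] [TopologicalSpace R] :
    TopologicalSpace (PowerSeries R) :=
  TopologicalSpace.induced (fun f (n : ℕ) => (PowerSeries.coeff (R := R) n) f) Pi.topologicalSpace

/-- The $q$-Pochhammer symbol $(a;q)_n = \prod_{j=1}^{n}(1 - a q^{j-1})$. -/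
def qPoch {R : Type*} [CommRing R] (a q : R) (n : ℕ) : R :=
  ∏ k ∈ Finset.range n, (1 - a * q ^ k)

/-- Formal power series in `x` (outer variable) over formal power series in `q`
(inner variable); i.e. formal power series in `q` and `x`. -/
abbrev Rqx : Type := PowerSeries (PowerSeries ℚ)

/-- The variable `x`. -/
def Xx : Rqx := PowerSeries.X

/-- The variable `q`, viewed as a constant (in `x`) power series. -/
def Qc : Rqx := PowerSeries.C PowerSeries.X

/-- The period-12 function `χ₁₂`: value 1 at `n ≡ ±1`, `-1` at `n ≡ ±5 (mod 12)`. -/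
def chi12 (n : ℕ) : ℤ :=
  if n % 12 = 1 ∨ n % 12 = 11 then 1 else if n % 12 = 5 ∨ n % 12 = 7 then -1 else 0

open PowerSeries Finset

section qPochhammer

variable {R : Type*} [CommRing R]

theorem qPoch_succ (a q : R) (n : ℕ) : qPoch a q (n + 1) = qPoch a q n * (1 - a * q ^ n) :=
  prod_range_succ _ n

theorem qPoch_succ_eq_one_sub_mul (a q : R) (n : ℕ) :
    qPoch a q (n + 1) = (1 - a) * qPoch (q * a) q n := by
  rw [qPoch, prod_range_succ', mul_comm, qPoch]
  simp only [pow_succ, pow_zero, mul_one]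
  congr 1
  refine prod_congr rfl fun k _ => ?_
  ring

def zagierSum (x q : R) (N : ℕ) : R :=
  ∑ n ∈ range N, qPoch x q (n + 1) * x ^ n

theorem zagierSum_succ (x q : R) (N : ℕ) :
    zagierSum x q (N + 1) = zagierSum x q N + qPoch x q (N + 1) * x ^ N :=
  sum_range_succ _ N

theorem map_zagierSum {S : Type*} [CommRing S] (φ : R →+* S) (x q : R) (N : ℕ) :
    φ (zagierSum x q N) = zagierSum (φ x) (φ q) N := by
  simp [zagierSum, qPoch, map_prod]

theorem one_sub_mul_zagierSum_sub (x q : R) (N : ℕ) :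
    (1 - x) * (zagierSum x q (N + 2) - (1 - q * x ^ 2 - q ^ 2 * x ^ 3 * zagierSum (q * x) q N)) =
      -(qPoch x q (N + 2) * x ^ (N + 2)) := by
  induction N with
  | zero => simp [zagierSum, qPoch, prod_range_succ, sum_range_succ]; ring
  | succ N ih =>
    rw [zagierSum_succ x q (N + 2), zagierSum_succ (q * x), qPoch_succ x q (N + 2)]
    linear_combination ih - q ^ (N + 2) * x ^ (N + 3) * qPoch_succ_eq_one_sub_mul x q (N + 1)

end qPochhammer

section PowerSeries

variable {R : Type*}

section Semiring

variable [Semiring R]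

theorem eq_zero_of_forall_X_pow_dvd {f : R⟦X⟧} (h : ∀ n, X ^ n ∣ f) : f = 0 := by
  ext m
  exact X_pow_dvd_iff.mp (h (m + 1)) m m.lt_succ_self

variable [TopologicalSpace R]

theorem isInducing_coeff : Topology.IsInducing fun (f : R⟦X⟧) (n : ℕ) => coeff n f :=
  Topology.IsInducing.induced _

instance [T2Space R] : T2Space R⟦X⟧ :=
  Topology.IsEmbedding.t2Space ⟨isInducing_coeff, fun _ _ h => ext (congrFun h)⟩

theorem hasSum_iff_forall_hasSum_coeff {ι : Type*} {f : ι → R⟦X⟧} {g : R⟦X⟧} :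
    HasSum f g ↔ ∀ m, HasSum (fun i => coeff m (f i)) (coeff m g) := by
  simp_rw [HasSum, ← map_sum]
  rw [isInducing_coeff.tendsto_nhds_iff, tendsto_pi_nhds]
  rfl

theorem summable_of_X_pow_dvd {f : ℕ → R⟦X⟧} (hf : ∀ n, X ^ n ∣ f n) : Summable f := by
  refine ⟨mk fun m => ∑ n ∈ range (m + 1), coeff m (f n),
    hasSum_iff_forall_hasSum_coeff.mpr fun m => ?_⟩
  rw [coeff_mk]
  refine hasSum_sum_of_ne_finset_zero fun n hn => X_pow_dvd_iff.mp (hf n) m ?_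
  simpa using hn

end Semiring

theorem X_pow_dvd_sub_sum_range_of_hasSum [Ring R] [TopologicalSpace R] [T2Space R]
    {f : ℕ → R⟦X⟧} {F : R⟦X⟧} (hf : ∀ n, X ^ n ∣ f n) (hF : HasSum f F) (N : ℕ) :
    X ^ N ∣ F - ∑ n ∈ range N, f n := by
  refine X_pow_dvd_iff.mpr fun m hm => ?_
  have hm' : HasSum (fun n => coeff m (f n)) (∑ n ∈ range N, coeff m (f n)) :=
    hasSum_sum_of_ne_finset_zero fun n hn =>
      X_pow_dvd_iff.mp (hf n) m (by simp at hn; omega)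
  rw [map_sub, map_sum, (hasSum_iff_forall_hasSum_coeff.mp hF m).unique hm', sub_self]

section CommSemiring

variable [CommSemiring R]

theorem rescale_C (a b : R) : rescale a (C b) = C b := by
  ext n
  rcases n with _ | n <;> simp [coeff_rescale, coeff_C]

theorem X_pow_dvd_rescale {q : R} {g : R⟦X⟧} {n : ℕ} (h : X ^ n ∣ g) : X ^ n ∣ rescale q g :=
  X_pow_dvd_iff.mpr fun m hm => by rw [coeff_rescale, X_pow_dvd_iff.mp h m hm, mul_zero]

end CommSemiring

end PowerSeries

theorem chi12_add_six (n : ℕ) : chi12 (n + 6) = -chi12 n := by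
  unfold chi12
  split_ifs <;> omega

theorem chi12_two_mul (k : ℕ) : chi12 (2 * k) = 0 := by
  unfold chi12
  split_ifs <;> omega

section FunctionalEquation

variable {R : Type*} [CommRing R]

def zagierOp (q : R) (g : R⟦X⟧) : R⟦X⟧ :=
  1 - C q * X ^ 2 - C q ^ 2 * X ^ 3 * rescale q g

theorem X_pow_dvd_zagierOp_sub_zagierOp (q : R) {g h : R⟦X⟧} {n : ℕ} (hgh : X ^ n ∣ g - h) :
    X ^ (n + 3) ∣ zagierOp q g - zagierOp q h := by
  have hsub : zagierOp q g - zagierOp q h = -(C q ^ 2 * (X ^ 3 * rescale q (g - h))) := by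
    rw [zagierOp, zagierOp, map_sub]
    ring
  rw [hsub, dvd_neg, pow_add, mul_comm (X ^ n)]
  exact dvd_mul_of_dvd_right (mul_dvd_mul_left _ (X_pow_dvd_rescale hgh)) _

theorem X_pow_dvd_zagierSum_sub_zagierOp (q : R) (N : ℕ) :
    X ^ (N + 2) ∣ zagierSum X (C q) (N + 2) - zagierOp q (zagierSum X (C q) N) := by
  have hunit : IsUnit (1 - X : R⟦X⟧) := by
    simp [isUnit_iff_constantCoeff]
  rw [← hunit.dvd_mul_left, zagierOp, map_zagierSum, rescale_X, rescale_C,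
    one_sub_mul_zagierSum_sub]
  exact (dvd_mul_left _ _).neg_right

theorem eq_of_zagierOp_eq_self {q : R} {F G : R⟦X⟧} (hF : zagierOp q F = F)
    (hG : zagierOp q G = G) : F = G := by
  refine sub_eq_zero.mp (eq_zero_of_forall_X_pow_dvd fun n => ?_)
  induction n with
  | zero => exact one_dvd _
  | succ n ih =>
    have h := X_pow_dvd_zagierOp_sub_zagierOp q ih
    rw [hF, hG] at h
    exact dvd_trans (pow_dvd_pow X (by omega)) h

theorem zagierOp_eq_self_of_hasSum [TopologicalSpace R] [T2Space R] {q : R} {F : R⟦X⟧}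
    (hF : HasSum (fun n => qPoch X (C q) (n + 1) * X ^ n) F) : zagierOp q F = F := by
  have hpartial (N : ℕ) : X ^ N ∣ F - zagierSum X (C q) N :=
    X_pow_dvd_sub_sum_range_of_hasSum (fun n => dvd_mul_left _ _) hF N
  refine (sub_eq_zero.mp (eq_zero_of_forall_X_pow_dvd fun N => ?_)).symm
  have h : X ^ (N + 2) ∣ (F - zagierSum X (C q) (N + 2)) +
      (zagierSum X (C q) (N + 2) - zagierOp q (zagierSum X (C q) N)) +
      (zagierOp q (zagierSum X (C q) N) - zagierOp q F) :=
    dvd_add (dvd_add (hpartial _) (X_pow_dvd_zagierSum_sub_zagierOp q N))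
      (dvd_trans (pow_dvd_pow X (by omega))
        (X_pow_dvd_zagierOp_sub_zagierOp q (dvd_sub_comm.mp (hpartial N))))
  rw [sub_add_sub_cancel, sub_add_sub_cancel] at h
  exact dvd_trans (pow_dvd_pow X (by omega)) h

def chi12Series (q : R) : R⟦X⟧ :=
  mk fun m => (chi12 (2 * m + 1) : R) * q ^ (m * (m + 1) / 6)

theorem zagierOp_chi12Series (q : R) : zagierOp q (chi12Series q) = chi12Series q := by
  ext m
  simp only [zagierOp, mul_assoc, ← map_pow, map_sub, coeff_one, coeff_C_mul, coeff_X_pow_mul',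
    coeff_rescale, chi12Series, coeff_mk]
  rcases m with _ | _ | _ | m
  · simp [chi12]
  · simp [chi12]
  · simp [chi12]
  · have hexp : (m + 3) * (m + 3 + 1) / 6 = m * (m + 1) / 6 + (m + 2) := by
      rw [show (m + 3) * (m + 3 + 1) = m * (m + 1) + (m + 2) * 6 by ring,
        Nat.add_mul_div_right _ _ (by norm_num)]
    simp [hexp, chi12_add_six (2 * m + 1), show 2 * (m + 3) + 1 = 2 * m + 1 + 6 by ring]
    ring

theorem hasSum_chi12Series [TopologicalSpace R] (q : R) :
    HasSum (fun n : ℕ => (chi12 n : R⟦X⟧) * C q ^ ((n ^ 2 - 1) / 24) * X ^ ((n - 1) / 2))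
      (chi12Series q) := by
  refine hasSum_iff_forall_hasSum_coeff.mpr fun m => ?_
  have hexp : ((2 * m + 1) ^ 2 - 1) / 24 = m * (m + 1) / 6 := by
    rw [show (2 * m + 1) ^ 2 - 1 = 4 * (m * (m + 1)) by rw [Nat.sub_eq_of_eq_add]; ring,
      show 24 = 4 * 6 by rfl, Nat.mul_div_mul_left _ _ (by norm_num)]
  have hcoeff (n : ℕ) :
      coeff m ((chi12 n : R⟦X⟧) * C q ^ ((n ^ 2 - 1) / 24) * X ^ ((n - 1) / 2)) =
        if m = (n - 1) / 2 then (chi12 n : R) * q ^ ((n ^ 2 - 1) / 24) else 0 := by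
    rw [← map_intCast (C (R := R)), ← map_pow, ← map_mul, coeff_C_mul_X_pow]
  simp_rw [hcoeff]
  convert hasSum_single (2 * m + 1) fun n hn => ?_ using 1
  · simp [chi12Series, hexp]
  · split_ifs with h
    · obtain ⟨k, rfl⟩ : ∃ k, n = 2 * k := ⟨n / 2, by omega⟩
      simp [chi12_two_mul]
    · rfl

end FunctionalEquation

/-- Zagier's strange identity in two variables:
`∑_{n≥0} χ₁₂(n) q^{(n²-1)/24} x^{(n-1)/2} = ∑_{n≥0} (x;q)_{n+1} xⁿ`,
as formal power series in `q` and `x`. -/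
theorem zagier_two_variable :
    ∑' n : ℕ, (chi12 n : Rqx) * Qc ^ ((n ^ 2 - 1) / 24) * Xx ^ ((n - 1) / 2) =
      ∑' n : ℕ, qPoch Xx Qc (n + 1) * Xx ^ n := by
  unfold Xx Qc
  have hRHS := (summable_of_X_pow_dvd fun n => dvd_mul_left _ (qPoch X (C X) (n + 1) : Rqx)).hasSum
  rw [(hasSum_chi12Series _).tsum_eq]
  exact eq_of_zagierOp_eq_self (zagierOp_chi12Series _) (zagierOp_eq_self_of_hasSum hRHS)
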